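/- In ST^H: Th(X ∪ {S₁ ⊔ S₂}) = Th(X ∪ {S₁}) ∩ Th(X ∪ {S₂}); equivalently, X, S₁ ⊔ S₂ ⊢ S if and only if both X, S₁ ⊢ S and X, S₂ ⊢ S, where (Γ₁ ▷ Δ₁) ⊔ (Γ₂ ▷ Δ₂) = (Γ₁∪Γ₂ ▷ Δ₁∪Δ₂). -/

import Mathlib

mutual
/-- Terms over the Henkin expansion of a first-order signature: variables,
function symbols applied to lists of terms, and Henkin witness constants
`w(∀x φ)` and `w(∃x φ)`. -/
inductive HTerm : Type
  | var : ℕ → HTerm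
  | func : ℕ → List HTerm → HTerm
  | wAll : ℕ → HForm → HTerm
  | wEx : ℕ → HForm → HTerm
/-- Formulas over the Henkin expansion of a first-order signature. -/
inductive HForm : Type
  | rel : ℕ → List HTerm → HForm
  | neg : HForm → HForm
  | conj : HForm → HForm → HForm
  | disj : HForm → HForm → HForm
  | all : ℕ → HForm → HForm
  | ex : ℕ → HForm → HForm
end

mutual
/-- Substitution of a term for a variable in a Henkin term. -/
def HTerm.subst (x : ℕ) (t : HTerm) : HTerm → HTerm
  | .var y => if y = x then t else .var y
  | .func f ts => .func f (ts.attach.map (fun s => HTerm.subst x t s.1))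
  | .wAll y φ => .wAll y (if y = x then φ else HForm.subst x t φ)
  | .wEx y φ => .wEx y (if y = x then φ else HForm.subst x t φ)
termination_by s => sizeOf s
decreasing_by
  all_goals simp_wf
  all_goals first
    | (have := List.sizeOf_lt_of_mem s.2; omega)
    | omega
/-- Substitution of a term for a variable in a Henkin formula
(not substituting under a binder for the same variable). -/
def HForm.subst (x : ℕ) (t : HTerm) : HForm → HForm
  | .rel r ts => .rel r (ts.attach.map (fun s => HTerm.subst x t s.1))
  | .neg φ => .neg (HForm.subst x t φ)
  | .conj φ ψ => .conj (HForm.subst x t φ) (HForm.subst x t ψ)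
  | .disj φ ψ => .disj (HForm.subst x t φ) (HForm.subst x t ψ)
  | .all y φ => .all y (if y = x then φ else HForm.subst x t φ)
  | .ex y φ => .ex y (if y = x then φ else HForm.subst x t φ)
termination_by φ => sizeOf φ
decreasing_by
  all_goals simp_wf
  all_goals first
    | (have := List.sizeOf_lt_of_mem s.2; omega)
    | omega
end

noncomputable instance : DecidableEq HForm := Classical.decEq _

/-- A sequent: a pair of finite sets of Henkin formulas. -/
abbrev HSeq : Type := Finset HForm × Finset HForm

/-- Componentwise union of sequents. -/
noncomputable def HSeq.squnion (S₁ S₂ : HSeq) : HSeq := (S₁.1 ∪ S₂.1, S₁.2 ∪ S₂.2)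

/-- Derivability in the calculus `ST^H`: identity, weakening, invertible rules
for the connectives, witness introduction/elimination rules for the Henkin
constants, and the (invertible) quantifier rules via Henkin witnesses. -/
inductive STH (X : Set HSeq) : HSeq → Prop
  | hyp {S} : S ∈ X → STH X S
  | id (φ : HForm) : STH X ({φ}, {φ})
  | wl {Γ Δ} (φ) : STH X (Γ, Δ) → STH X (insert φ Γ, Δ)
  | wr {Γ Δ} (φ) : STH X (Γ, Δ) → STH X (Γ, insert φ Δ)
  | andL {Γ Δ φ ψ} : STH X (insert φ (insert ψ Γ), Δ) → STH X (insert (.conj φ ψ) Γ, Δ)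
  | andLinv {Γ Δ φ ψ} : STH X (insert (.conj φ ψ) Γ, Δ) → STH X (insert φ (insert ψ Γ), Δ)
  | andR {Γ Δ φ ψ} : STH X (Γ, insert φ Δ) → STH X (Γ, insert ψ Δ) →
      STH X (Γ, insert (.conj φ ψ) Δ)
  | andRinv₁ {Γ Δ φ ψ} : STH X (Γ, insert (.conj φ ψ) Δ) → STH X (Γ, insert φ Δ)
  | andRinv₂ {Γ Δ φ ψ} : STH X (Γ, insert (.conj φ ψ) Δ) → STH X (Γ, insert ψ Δ)
  | orR {Γ Δ φ ψ} : STH X (Γ, insert φ (insert ψ Δ)) → STH X (Γ, insert (.disj φ ψ) Δ)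
  | orRinv {Γ Δ φ ψ} : STH X (Γ, insert (.disj φ ψ) Δ) → STH X (Γ, insert φ (insert ψ Δ))
  | orL {Γ Δ φ ψ} : STH X (insert φ Γ, Δ) → STH X (insert ψ Γ, Δ) →
      STH X (insert (.disj φ ψ) Γ, Δ)
  | orLinv₁ {Γ Δ φ ψ} : STH X (insert (.disj φ ψ) Γ, Δ) → STH X (insert φ Γ, Δ)
  | orLinv₂ {Γ Δ φ ψ} : STH X (insert (.disj φ ψ) Γ, Δ) → STH X (insert ψ Γ, Δ)
  | negL {Γ Δ φ} : STH X (Γ, insert φ Δ) → STH X (insert (.neg φ) Γ, Δ)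
  | negLinv {Γ Δ φ} : STH X (insert (.neg φ) Γ, Δ) → STH X (Γ, insert φ Δ)
  | negR {Γ Δ φ} : STH X (insert φ Γ, Δ) → STH X (Γ, insert (.neg φ) Δ)
  | negRinv {Γ Δ φ} : STH X (Γ, insert (.neg φ) Δ) → STH X (insert φ Γ, Δ)
  | uwi {Γ Δ} {φ : HForm} {x : ℕ} (t : HTerm) : STH X (insert (φ.subst x t) Γ, Δ) →
      STH X (insert (φ.subst x (.wAll x φ)) Γ, Δ)
  | ewi {Γ Δ} {φ : HForm} {x : ℕ} (t : HTerm) : STH X (Γ, insert (φ.subst x t) Δ) →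
      STH X (Γ, insert (φ.subst x (.wEx x φ)) Δ)
  | ewe {Γ Δ} {φ : HForm} {x : ℕ} (t : HTerm) : STH X (insert (φ.subst x (.wEx x φ)) Γ, Δ) →
      STH X (insert (φ.subst x t) Γ, Δ)
  | uwe {Γ Δ} {φ : HForm} {x : ℕ} (t : HTerm) : STH X (Γ, insert (φ.subst x (.wAll x φ)) Δ) →
      STH X (Γ, insert (φ.subst x t) Δ)
  | allLW {Γ Δ} {φ : HForm} {x : ℕ} : STH X (insert (φ.subst x (.wAll x φ)) Γ, Δ) →
      STH X (insert (.all x φ) Γ, Δ)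
  | allLWinv {Γ Δ} {φ : HForm} {x : ℕ} : STH X (insert (.all x φ) Γ, Δ) →
      STH X (insert (φ.subst x (.wAll x φ)) Γ, Δ)
  | allRW {Γ Δ} {φ : HForm} {x : ℕ} : STH X (Γ, insert (φ.subst x (.wAll x φ)) Δ) →
      STH X (Γ, insert (.all x φ) Δ)
  | allRWinv {Γ Δ} {φ : HForm} {x : ℕ} : STH X (Γ, insert (.all x φ) Δ) →
      STH X (Γ, insert (φ.subst x (.wAll x φ)) Δ)
  | exLW {Γ Δ} {φ : HForm} {x : ℕ} : STH X (insert (φ.subst x (.wEx x φ)) Γ, Δ) →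
      STH X (insert (.ex x φ) Γ, Δ)
  | exLWinv {Γ Δ} {φ : HForm} {x : ℕ} : STH X (insert (.ex x φ) Γ, Δ) →
      STH X (insert (φ.subst x (.wEx x φ)) Γ, Δ)
  | exRW {Γ Δ} {φ : HForm} {x : ℕ} : STH X (Γ, insert (φ.subst x (.wEx x φ)) Δ) →
      STH X (Γ, insert (.ex x φ) Δ)
  | exRWinv {Γ Δ} {φ : HForm} {x : ℕ} : STH X (Γ, insert (.ex x φ) Δ) →
      STH X (Γ, insert (φ.subst x (.wEx x φ)) Δ)

/-- An `ST^H`-theory: a set of sequents closed under derivability. -/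
def IsTheory (T : Set HSeq) : Prop := ∀ S, STH T S → S ∈ T

/-- A prime theory: `Γ ▷ Δ ∈ T` with `Γ ∪ Δ ≠ ∅` implies `γ ▷ ∅ ∈ T` for some
`γ ∈ Γ` or `∅ ▷ δ ∈ T` for some `δ ∈ Δ`. -/
def IsPrime (T : Set HSeq) : Prop :=
  ∀ Γ Δ : Finset HForm, (Γ, Δ) ∈ T → (Γ ∪ Δ).Nonempty →
    (∃ γ ∈ Γ, (({γ} : Finset HForm), (∅ : Finset HForm)) ∈ T) ∨
    (∃ δ ∈ Δ, ((∅ : Finset HForm), ({δ} : Finset HForm)) ∈ T)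

/-- Weakening on the left by a finite set. -/
lemma STH.weakenL {X : Set HSeq} {Γ Δ : Finset HForm} (Γ' : Finset HForm)
    (h : STH X (Γ, Δ)) : STH X (Γ ∪ Γ', Δ) := by
  classical
  induction Γ' using Finset.induction_on with
  | empty => simpa using h
  | insert _ _ _ ih => rw [Finset.union_insert]; exact .wl _ ih

/-- Weakening on the right by a finite set. -/
lemma STH.weakenR {X : Set HSeq} {Γ Δ : Finset HForm} (Δ' : Finset HForm)
    (h : STH X (Γ, Δ)) : STH X (Γ, Δ ∪ Δ') := by
  classical
  induction Δ' using Finset.induction_on with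
  | empty => simpa using h
  | insert _ _ _ ih => rw [Finset.union_insert]; exact .wr _ ih

/-- Weakening on both sides. -/
lemma STH.weaken {X : Set HSeq} {Γ Δ : Finset HForm} (Γ' Δ' : Finset HForm)
    (h : STH X (Γ, Δ)) : STH X (Γ ∪ Γ', Δ ∪ Δ') :=
  (h.weakenL Γ').weakenR Δ'

/-- If every hypothesis in `X` is derivable from `Y`, then anything derivable
from `X` is derivable from `Y`. -/
lemma STH.mono {X Y : Set HSeq} (hXY : ∀ T ∈ X, STH Y T) {S : HSeq}
    (h : STH X S) : STH Y S := by
  induction h with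
  | hyp h => exact hXY _ h
  | _ =>
    first
    | exact .id _
    | (rename_i ih₁ ih₂
       first
       | exact .andR ih₁ ih₂
       | exact .orL ih₁ ih₂)
    | (rename_i ih
       first
       | exact .wl _ ih | exact .wr _ ih
       | exact .andL ih | exact .andLinv ih
       | exact .andRinv₁ ih | exact .andRinv₂ ih
       | exact .orR ih | exact .orRinv ih
       | exact .orLinv₁ ih | exact .orLinv₂ ih
       | exact .negL ih | exact .negLinv ih | exact .negR ih | exact .negRinv ih
       | exact .uwi _ ih | exact .ewi _ ih | exact .ewe _ ih | exact .uwe _ ih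
       | exact .allLW ih | exact .allLWinv ih | exact .allRW ih | exact .allRWinv ih
       | exact .exLW ih | exact .exLWinv ih | exact .exRW ih | exact .exRWinv ih)

/-- Merging a fixed sequent `P` into every sequent of a derivation from
`X, S₀` yields a derivation from `X, S₀ ⊔ P`. -/
lemma STH.merge {X : Set HSeq} {S₀ : HSeq} (P : HSeq) {S : HSeq}
    (h : STH (X ∪ {S₀}) S) :
    STH (X ∪ {S₀.squnion P}) (S.1 ∪ P.1, S.2 ∪ P.2) := by
  induction h with
  | hyp h =>
    rcases h with h | rfl
    · exact (STH.hyp (Or.inl h)).weaken P.1 P.2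
    · exact STH.hyp (Or.inr rfl)
  | id φ => exact (STH.id φ).weaken P.1 P.2
  | _ =>
    dsimp only at *
    try simp only [Finset.insert_union] at *
    first
    | (rename_i ih₁ ih₂
       first
       | exact .andR ih₁ ih₂
       | exact .orL ih₁ ih₂)
    | (rename_i ih
       first
       | exact .wl _ ih | exact .wr _ ih
       | exact .andL ih | exact .andLinv ih
       | exact .andRinv₁ ih | exact .andRinv₂ ih
       | exact .orR ih | exact .orRinv ih
       | exact .orLinv₁ ih | exact .orLinv₂ ih
       | exact .negL ih | exact .negLinv ih | exact .negR ih | exact .negRinv ih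
       | exact .uwi _ ih | exact .ewi _ ih | exact .ewe _ ih | exact .uwe _ ih
       | exact .allLW ih | exact .allLWinv ih | exact .allRW ih | exact .allRWinv ih
       | exact .exLW ih | exact .exLWinv ih | exact .exRW ih | exact .exRWinv ih)

/-- The set of sequents derivable from `X, S₁ ⊔ S₂` equals the intersection of
those derivable from `X, S₁` and from `X, S₂`. -/
theorem derivable_from_squnion_iff (X : Set HSeq) (S₁ S₂ S : HSeq) :
    STH (X ∪ {S₁.squnion S₂}) S ↔ STH (X ∪ {S₁}) S ∧ STH (X ∪ {S₂}) S := by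
  constructor
  · intro h
    constructor
    · refine h.mono (fun T hT => ?_)
      rcases hT with hT | rfl
      · exact .hyp (Or.inl hT)
      · exact (STH.hyp (Or.inr rfl) : STH _ (S₁.1, S₁.2)).weaken S₂.1 S₂.2
    · refine h.mono (fun T hT => ?_)
      rcases hT with hT | rfl
      · exact .hyp (Or.inl hT)
      · have := (STH.hyp (Or.inr rfl) : STH (X ∪ {S₂}) (S₂.1, S₂.2)).weaken S₁.1 S₁.2
        simpa [HSeq.squnion, Finset.union_comm] using this
  · rintro ⟨h₁, h₂⟩
    have d : STH (X ∪ {S₁.squnion S₂}) (S.1 ∪ S₂.1, S.2 ∪ S₂.2) := h₁.merge S₂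
    have e : STH (X ∪ {S₂.squnion S}) (S.1 ∪ S.1, S.2 ∪ S.2) := h₂.merge S
    have e' : STH (X ∪ {S₂.squnion S}) S := by simpa using e
    refine e'.mono (fun T hT => ?_)
    rcases hT with hT | rfl
    · exact .hyp (Or.inl hT)
    · simpa [HSeq.squnion, Finset.union_comm] using d
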